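/- arXiv:2006.14063 — 4 statements merged into one kernel-verified Lean document; each statement's English description precedes it below -/
import Mathlib

section
/- For a finite subset X of Euclidean space ℝⁿ, the similarity matrix ζ_X defined by ζ_X(i,j) = exp(-‖x_i - x_j‖) is symmetric positive definite; in particular it is invertible. -/
/-!
Schoenberg's subordination: for `s ≥ 0`,
`exp (-s) = 2 / √π * ∫_{t > 0} exp (-t²) * exp (-s² / (4 t²)) dt`,
a consequence of the Cauchy–Schlömilch identity `∫_{x > 0} exp (-(x - b / x)²) dx = √π / 2`.
Hence the quadratic form of `exp (-‖xᵢ - xⱼ‖)` is a positive mixture of quadratic forms of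
Gaussian kernels `exp (-u ‖xᵢ - xⱼ‖²)`. These are positive semidefinite (Schur's product
theorem applied to the power series of `exp (2u ⟪xᵢ, xⱼ⟫)`), and for distinct points they tend
to the identity matrix as `u → ∞`, which makes the mixture strictly positive.
-/

open Matrix Real
open Filter Topology MeasureTheory Set

namespace Matrix

variable {ι : Type*} [Fintype ι]

lemma dotProduct_mulVec_eq_sum (c : ι → ℝ) (A : Matrix ι ι ℝ) :
    c ⬝ᵥ (A *ᵥ c) = ∑ i, ∑ j, c i * A i j * c j := by
  simp only [dotProduct, mulVec, Finset.mul_sum, mul_assoc]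

theorem PosSemidef.map_pow {A : Matrix ι ι ℝ} (hA : A.PosSemidef) (k : ℕ) :
    (A.map (· ^ k)).PosSemidef := by
  induction k with
  | zero =>
    convert posSemidef_vecMulVec_self_star (1 : ι → ℝ) using 1
    ext i j
    simp [vecMulVec_apply]
  | succ k ih =>
    have h : A.map (· ^ (k + 1)) = A.map (· ^ k) ⊙ A := by
      ext i j
      simp [pow_succ]
    exact h ▸ ih.hadamard hA

theorem PosSemidef.map_exp {A : Matrix ι ι ℝ} (hA : A.PosSemidef) :
    (A.map exp).PosSemidef := by
  refine .of_dotProduct_mulVec_nonneg (hA.isHermitian.map _ fun _ => rfl) fun c => ?_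
  have hsum : HasSum (fun k : ℕ => (k.factorial : ℝ)⁻¹ * (c ⬝ᵥ (A.map (· ^ k) *ᵥ c)))
      (c ⬝ᵥ (A.map exp *ᵥ c)) := by
    simp only [dotProduct_mulVec_eq_sum, Finset.mul_sum, map_apply]
    refine hasSum_sum fun i _ => hasSum_sum fun j _ => ?_
    have h := (NormedSpace.expSeries_div_hasSum_exp (A i j)).mul_left (c i) |>.mul_right (c j)
    rw [← exp_eq_exp_ℝ] at h
    simpa only [div_eq_inv_mul, mul_left_comm, mul_comm, mul_assoc] using h
  exact hsum.nonneg fun k =>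
    mul_nonneg (by positivity) ((hA.map_pow k).dotProduct_mulVec_nonneg c)

variable {α : Type*} [MeasurableSpace α] {μ : Measure α} {F : α → Matrix ι ι ℝ}

lemma integrable_dotProduct_mulVec (hF : ∀ i j, Integrable (fun a => F a i j) μ) (c : ι → ℝ) :
    Integrable (fun a => c ⬝ᵥ (F a *ᵥ c)) μ := by
  simp only [dotProduct_mulVec_eq_sum]
  exact integrable_finsetSum _ fun i _ => integrable_finsetSum _ fun j _ =>
    ((hF i j).const_mul (c i)).mul_const (c j)

lemma dotProduct_mulVec_integral (hF : ∀ i j, Integrable (fun a => F a i j) μ) (c : ι → ℝ) :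
    c ⬝ᵥ (of (fun i j => ∫ a, F a i j ∂μ) *ᵥ c) = ∫ a, c ⬝ᵥ (F a *ᵥ c) ∂μ := by
  simp only [dotProduct_mulVec_eq_sum, of_apply]
  rw [integral_finsetSum _ fun i _ => integrable_finsetSum _ fun j _ =>
    ((hF i j).const_mul (c i)).mul_const (c j)]
  refine Finset.sum_congr rfl fun i _ => ?_
  rw [integral_finsetSum _ fun j _ => ((hF i j).const_mul (c i)).mul_const (c j)]
  simp only [integral_mul_const, integral_const_mul]

end Matrix

section GaussianKernel

variable {ι E : Type*}

noncomputable def gaussianKernel [NormedAddCommGroup E] (x : ι → E) (u : ℝ) : Matrix ι ι ℝ :=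
  of fun i j => exp (-(u * ‖x i - x j‖ ^ 2))

variable [Fintype ι] [NormedAddCommGroup E] [InnerProductSpace ℝ E]

lemma gaussianKernel_eq_diagonal_mul_map_exp_mul_diagonal [DecidableEq ι] (x : ι → E) (u : ℝ) :
    gaussianKernel x u = diagonal (fun i => exp (-(u * ‖x i‖ ^ 2))) *
      ((2 * u) • gram ℝ x).map exp * diagonal (fun i => exp (-(u * ‖x i‖ ^ 2))) := by
  ext i j
  simp only [gaussianKernel, of_apply, diagonal_mul, mul_diagonal, map_apply, Matrix.smul_apply,
    gram_apply, smul_eq_mul, ← exp_add]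
  congr 1
  rw [norm_sub_sq_real, real_inner_comm]
  ring

theorem posSemidef_gaussianKernel (x : ι → E) {u : ℝ} (hu : 0 ≤ u) :
    (gaussianKernel x u).PosSemidef := by
  classical
  rw [gaussianKernel_eq_diagonal_mul_map_exp_mul_diagonal]
  simpa using ((posSemidef_gram ℝ x).smul (by positivity : (0 : ℝ) ≤ 2 * u)).map_exp
    |>.mul_mul_conjTranspose_same (diagonal fun i => exp (-(u * ‖x i‖ ^ 2)))

end GaussianKernel

theorem tendsto_gaussianKernel_atTop {ι E : Type*} [DecidableEq ι] [NormedAddCommGroup E]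
    {x : ι → E} (hx : Function.Injective x) : Tendsto (gaussianKernel x) atTop (𝓝 1) := by
  refine tendsto_pi_nhds.2 fun i => tendsto_pi_nhds.2 fun j => ?_
  rcases eq_or_ne i j with rfl | hij
  · simp [gaussianKernel]
  · have hpos : 0 < ‖x i - x j‖ ^ 2 := by
      have := sub_ne_zero.2 (hx.ne hij)
      positivity
    simp only [gaussianKernel, of_apply, one_apply_ne hij]
    exact tendsto_exp_atBot.comp <| tendsto_neg_atTop_atBot.comp <|
      tendsto_id.atTop_mul_const hpos

lemma strictMonoOn_sub_div {b : ℝ} (hb : 0 ≤ b) :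
    StrictMonoOn (fun x : ℝ => x - b / x) (Ioi 0) := fun x hx _ _ hxy => by
  have := div_le_div_of_nonneg_left hb hx hxy.le
  dsimp only
  linarith

lemma image_sub_div_Ioi {b : ℝ} (hb : 0 < b) : (fun x : ℝ => x - b / x) '' Ioi 0 = univ := by
  refine eq_univ_of_forall fun y => ?_
  have hsq : √(y ^ 2 + 4 * b) ^ 2 = y ^ 2 + 4 * b := sq_sqrt (by positivity)
  have hpos : 0 < y + √(y ^ 2 + 4 * b) := by
    have : |y| < √(y ^ 2 + 4 * b) := by
      rw [← sqrt_sq_eq_abs]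
      exact sqrt_lt_sqrt (sq_nonneg y) (by linarith)
    linarith [neg_abs_le y]
  -- the positive root of `x ^ 2 - y * x - b`
  refine ⟨(y + √(y ^ 2 + 4 * b)) / 2, half_pos hpos, ?_⟩
  field_simp
  linear_combination hsq

lemma hasDerivAt_sub_div (b : ℝ) {x : ℝ} (hx : x ≠ 0) :
    HasDerivAt (fun x : ℝ => x - b / x) (1 + b / x ^ 2) x := by
  have h := (hasDerivAt_id' x).fun_sub ((hasDerivAt_inv hx).const_mul b)
  simp only [← div_eq_mul_inv] at h
  exact h.congr_deriv (by ring)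

lemma hasDerivAt_div (b : ℝ) {x : ℝ} (hx : x ≠ 0) :
    HasDerivAt (fun x : ℝ => b / x) (-(b / x ^ 2)) x := by
  have h := (hasDerivAt_inv hx).const_mul b
  simp only [← div_eq_mul_inv] at h
  exact h.congr_deriv (by ring)

lemma injOn_div_Ioi {b : ℝ} (hb : 0 < b) : InjOn (fun x : ℝ => b / x) (Ioi 0) :=
  fun x _ y _ h => by simpa only [div_div_cancel₀ hb.ne'] using congrArg (b / ·) h

lemma image_div_Ioi {b : ℝ} (hb : 0 < b) : (fun x : ℝ => b / x) '' Ioi 0 = Ioi 0 := by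
  refine Subset.antisymm (image_subset_iff.2 fun x hx => div_pos hb hx) fun y hy => ?_
  exact ⟨b / y, div_pos hb hy, div_div_cancel₀ hb.ne'⟩

lemma integrableOn_one_add_div_sq_mul_exp_neg_sq_sub_div {b : ℝ} (hb : 0 < b) :
    IntegrableOn (fun x => (1 + b / x ^ 2) * exp (-(x - b / x) ^ 2)) (Ioi 0) := by
  have := (integrableOn_image_iff_integrableOn_abs_deriv_smul measurableSet_Ioi
    (fun x hx => (hasDerivAt_sub_div b (ne_of_gt hx)).hasDerivWithinAt)
    (strictMonoOn_sub_div hb.le).injOn (fun y => exp (-y ^ 2))).1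
    (by simpa [image_sub_div_Ioi hb] using integrable_exp_neg_mul_sq one_pos)
  refine this.congr_fun (fun x (hx : 0 < x) => ?_) measurableSet_Ioi
  dsimp only
  rw [smul_eq_mul, abs_of_pos (by positivity)]

lemma integral_one_add_div_sq_mul_exp_neg_sq_sub_div {b : ℝ} (hb : 0 < b) :
    ∫ x in Ioi 0, (1 + b / x ^ 2) * exp (-(x - b / x) ^ 2) = √π := by
  have := integral_image_eq_integral_abs_deriv_smul measurableSet_Ioi
    (fun x hx => (hasDerivAt_sub_div b (ne_of_gt hx)).hasDerivWithinAt)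
    (strictMonoOn_sub_div hb.le).injOn (fun y => exp (-y ^ 2))
  rw [image_sub_div_Ioi hb, Measure.restrict_univ] at this
  calc ∫ x in Ioi 0, (1 + b / x ^ 2) * exp (-(x - b / x) ^ 2)
      = ∫ x in Ioi 0, |1 + b / x ^ 2| • exp (-(x - b / x) ^ 2) :=
        setIntegral_congr_fun measurableSet_Ioi fun x (hx : 0 < x) => by
          rw [smul_eq_mul, abs_of_pos (by positivity)]
    _ = √π := by rw [← this]; simpa using integral_gaussian 1

/-- The inversion `x ↦ b / x` of `(0, ∞)` turns `x - b / x` into its negative. -/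
lemma integral_div_sq_mul_exp_neg_sq_sub_div {b : ℝ} (hb : 0 < b) :
    ∫ x in Ioi 0, b / x ^ 2 * exp (-(x - b / x) ^ 2) = ∫ x in Ioi 0, exp (-(x - b / x) ^ 2) := by
  have := integral_image_eq_integral_abs_deriv_smul measurableSet_Ioi
    (fun x hx => (hasDerivAt_div b (ne_of_gt hx)).hasDerivWithinAt) (injOn_div_Ioi hb)
    (fun x => exp (-(x - b / x) ^ 2))
  rw [image_div_Ioi hb] at this
  rw [this]
  refine setIntegral_congr_fun measurableSet_Ioi fun x (hx : 0 < x) => ?_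
  simp only [abs_neg, smul_eq_mul, abs_of_pos (div_pos hb (pow_pos hx 2)),
    div_div_cancel₀ hb.ne']
  rw [← neg_sub, neg_sq]

theorem integral_exp_neg_sq_sub_div {b : ℝ} (hb : 0 ≤ b) :
    ∫ x in Ioi 0, exp (-(x - b / x) ^ 2) = √π / 2 := by
  rcases hb.eq_or_lt with rfl | hb
  · simpa using integral_gaussian_Ioi 1
  set g : ℝ → ℝ := fun x => exp (-(x - b / x) ^ 2)
  have hfull := integrableOn_one_add_div_sq_mul_exp_neg_sq_sub_div hb
  have hg : IntegrableOn g (Ioi 0) := by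
    refine hfull.mono' (by fun_prop : Measurable g).aestronglyMeasurable
      (ae_restrict_of_forall_mem measurableSet_Ioi fun x _ => ?_)
    rw [norm_of_nonneg (exp_pos _).le]
    have : 0 ≤ b / x ^ 2 * g x := by positivity
    linarith
  have hsplit : ∫ x in Ioi 0, (1 + b / x ^ 2) * g x
      = (∫ x in Ioi 0, g x) + ∫ x in Ioi 0, b / x ^ 2 * g x := by
    rw [← integral_add hg]
    · simp only [add_mul, one_mul]
    · exact (hfull.sub hg).congr_fun (fun x _ => by simp only [Pi.sub_apply]; ring)
        measurableSet_Ioi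
  rw [integral_one_add_div_sq_mul_exp_neg_sq_sub_div hb,
    integral_div_sq_mul_exp_neg_sq_sub_div hb] at hsplit
  linarith

lemma integrableOn_exp_neg_sq_mul_exp_neg_inv (s : ℝ) :
    IntegrableOn (fun t => exp (-t ^ 2) * exp (-((4 * t ^ 2)⁻¹ * s ^ 2))) (Ioi 0) := by
  refine ((integrable_exp_neg_mul_sq one_pos).integrableOn).mono' (by fun_prop)
    (ae_of_all _ fun t => ?_)
  rw [norm_of_nonneg (by positivity), neg_one_mul]
  exact mul_le_of_le_one_right (exp_pos _).le (exp_le_one_iff.2 (by simp; positivity))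

theorem exp_neg_eq_integral {s : ℝ} (hs : 0 ≤ s) :
    exp (-s) = 2 / √π * ∫ t in Ioi 0, exp (-t ^ 2) * exp (-((4 * t ^ 2)⁻¹ * s ^ 2)) := by
  have hsq : ∀ t ∈ Ioi (0 : ℝ), exp (-t ^ 2) * exp (-((4 * t ^ 2)⁻¹ * s ^ 2))
      = exp (-s) * exp (-(t - s / 2 / t) ^ 2) := fun t ht => by
    have : t ≠ 0 := ne_of_gt ht
    rw [← exp_add, ← exp_add]
    congr 1
    field_simp
    ring
  rw [setIntegral_congr_fun measurableSet_Ioi hsq, integral_const_mul,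
    integral_exp_neg_sq_sub_div (by positivity)]
  field_simp

lemma setIntegral_Ioi_pos {f : ℝ → ℝ} {a : ℝ} (hf : IntegrableOn f (Ioi a))
    (hnonneg : ∀ x ∈ Ioi a, 0 ≤ f x) (hpos : ∀ᶠ x in 𝓝[>] a, 0 < f x) :
    0 < ∫ x in Ioi a, f x := by
  obtain ⟨b, hab, hb⟩ := mem_nhdsGT_iff_exists_Ioo_subset.1 hpos
  refine (setIntegral_pos_iff_support_of_nonneg_ae
    (ae_restrict_of_forall_mem measurableSet_Ioi hnonneg) hf).2 ?_
  have hsub : Ioo a b ⊆ Function.support f ∩ Ioi a := fun x hx => ⟨(hb hx).ne', hx.1⟩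
  refine (measure_mono hsub).trans_lt' ?_
  simpa using hab

lemma tendsto_inv_four_mul_sq_nhdsGT_zero :
    Tendsto (fun t : ℝ => (4 * t ^ 2)⁻¹) (𝓝[>] 0) atTop := by
  refine Tendsto.inv_tendsto_nhdsGT_zero (tendsto_nhdsWithin_iff.2 ⟨?_, ?_⟩)
  · exact ((by fun_prop : Continuous fun t : ℝ => 4 * t ^ 2).tendsto' 0 0 (by simp)).mono_left
      nhdsWithin_le_nhds
  · filter_upwards [self_mem_nhdsWithin] with t (ht : 0 < t)
    exact mem_Ioi.2 (by positivity)

theorem posDef_exp_neg_dist {ι E : Type*} [Fintype ι] [NormedAddCommGroup E]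
    [InnerProductSpace ℝ E] {x : ι → E} (hx : Function.Injective x) :
    (of fun i j => exp (-dist (x i) (x j))).PosDef := by
  classical
  set F : ℝ → Matrix ι ι ℝ := fun t => exp (-t ^ 2) • gaussianKernel x (4 * t ^ 2)⁻¹
  have hF : ∀ i j, IntegrableOn (fun t => F t i j) (Ioi 0) := fun i j =>
    integrableOn_exp_neg_sq_mul_exp_neg_inv ‖x i - x j‖
  have hK : of (fun i j => exp (-dist (x i) (x j))) =
      (2 / √π) • of fun i j => ∫ t in Ioi 0, F t i j := by
    ext i j
    simp [F, gaussianKernel, dist_eq_norm, exp_neg_eq_integral (norm_nonneg (x i - x j))]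
  have hFc : ∀ c t,
      c ⬝ᵥ (F t *ᵥ c) = exp (-t ^ 2) * (c ⬝ᵥ (gaussianKernel x (4 * t ^ 2)⁻¹ *ᵥ c)) :=
    fun c t => by simp only [F, smul_mulVec, dotProduct_smul, smul_eq_mul]
  refine posDef_iff_dotProduct_mulVec.2 ⟨?_, fun c hc => ?_⟩
  · ext i j
    simp [dist_comm]
  rw [star_trivial, hK, smul_mulVec, dotProduct_smul, smul_eq_mul, dotProduct_mulVec_integral hF]
  refine mul_pos (by positivity) (setIntegral_Ioi_pos (integrable_dotProduct_mulVec hF c)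
    (fun t _ => ?_) ?_)
  · rw [hFc]
    exact mul_nonneg (exp_pos _).le
      ((posSemidef_gaussianKernel x (by positivity)).dotProduct_mulVec_nonneg c)
  · have hQ : Tendsto (fun t : ℝ => c ⬝ᵥ (gaussianKernel x (4 * t ^ 2)⁻¹ *ᵥ c)) (𝓝[>] 0)
        (𝓝 (c ⬝ᵥ ((1 : Matrix ι ι ℝ) *ᵥ c))) :=
      ((continuous_const.dotProduct (continuous_id.matrix_mulVec continuous_const)).tendsto 1).comp
        ((tendsto_gaussianKernel_atTop hx).comp tendsto_inv_four_mul_sq_nhdsGT_zero)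
    have hQ1 : 0 < c ⬝ᵥ ((1 : Matrix ι ι ℝ) *ᵥ c) := by
      simpa using PosDef.one.dotProduct_mulVec_pos hc
    filter_upwards [hQ.eventually (lt_mem_nhds hQ1)] with t ht
    rw [hFc]
    exact mul_pos (exp_pos _) ht

/-- For a finite subset `X = {x 0, ..., x (m-1)}` of Euclidean space ℝⁿ
(distinct points), the similarity matrix `ζ_X (i,j) = exp (-‖x i - x j‖)` is symmetric
positive definite; in particular it is invertible. -/
theorem similarity_matrix_posDef (n m : ℕ) (x : Fin m → EuclideanSpace ℝ (Fin n))
    (hx : Function.Injective x) :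
    (Matrix.of fun i j => Real.exp (-dist (x i) (x j))).IsSymm ∧
    (Matrix.of fun i j => Real.exp (-dist (x i) (x j))).PosDef ∧
    IsUnit (Matrix.of fun i j => Real.exp (-dist (x i) (x j))).det := by
  have hpd := posDef_exp_neg_dist hx
  exact ⟨isHermitian_iff_isSymm.1 hpd.isHermitian, hpd,
    (isUnit_iff_isUnit_det _).1 hpd.isUnit⟩
end

section
/- For a finite metric space X with metric d such that the similarity matrix of tX is invertible for all large t, the similarity matrix ζ_{tX} converges to the identity matrix as t → ∞, and consequently w_{tX}(tx) → 1 for each point x and Mag(tX) → |X|. -/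
open Matrix Real Filter

/-! As `t → ∞` every off-diagonal entry `exp (-t d(a, b))` of the similarity matrix decays to `0`
while the diagonal stays `1`, so `ζ_{tX} → 1`. Matrix inversion is continuous at the identity,
hence `ζ_{tX}⁻¹ → 1` too, and the weighting `ζ_{tX}⁻¹ 𝟙` tends to `𝟙`; summing gives `|X|`. -/

theorem tendsto_exp_neg_mul_dist_atTop {X : Type*} [MetricSpace X] [DecidableEq X] (a b : X) :
    Tendsto (fun t => exp (-(t * dist a b))) atTop (nhds (if a = b then 1 else 0)) := by
  by_cases hab : a = b
  · simp [hab]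
  · rw [if_neg hab]
    exact tendsto_exp_neg_atTop_nhds_zero.comp
      (tendsto_id.atTop_mul_const (dist_pos.mpr hab))

theorem tendsto_similarity_matrix_atTop {X : Type*} [MetricSpace X] [DecidableEq X] :
    Tendsto (fun t => Matrix.of fun a b : X => exp (-(t * dist a b))) atTop (nhds 1) :=
  tendsto_pi_nhds.mpr fun a => tendsto_pi_nhds.mpr fun b => by
    simpa only [of_apply, one_apply] using tendsto_exp_neg_mul_dist_atTop a b

section TopologicalField

variable {α n K : Type*} [Fintype n] [DecidableEq n] [Field K] [TopologicalSpace K]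
  [IsTopologicalDivisionRing K] {l : Filter α} {M : α → Matrix n n K}

theorem continuousAt_matrix_inv_one : ContinuousAt Inv.inv (1 : Matrix n n K) :=
  continuousAt_matrix_inv 1 <| by
    simpa only [det_one, Ring.inverse_eq_inv'] using continuousAt_inv₀ one_ne_zero

theorem Filter.Tendsto.matrix_inv_of_tendsto_one (hM : Tendsto M l (nhds 1)) :
    Tendsto (fun t => (M t)⁻¹) l (nhds 1) := by
  simpa only [inv_one, Function.comp_def] using continuousAt_matrix_inv_one.tendsto.comp hM

theorem Filter.Tendsto.matrix_inv_mulVec_of_tendsto_one (hM : Tendsto M l (nhds 1))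
    (v : n → K) : Tendsto (fun t => (M t)⁻¹ *ᵥ v) l (nhds v) :=
  ((continuous_id.matrix_mulVec continuous_const).tendsto' 1 v (one_mulVec v)).comp
    hM.matrix_inv_of_tendsto_one

end TopologicalField

theorem similarity_tendsto_identity_general (X : Type*) [Fintype X] [DecidableEq X] [MetricSpace X]
    (ζ : ℝ → Matrix X X ℝ)
    (hζ : ∀ t, ζ t = Matrix.of fun a b => Real.exp (-(t * dist a b))) :
    Tendsto ζ atTop (nhds (1 : Matrix X X ℝ)) ∧
    (∀ x : X, Tendsto (fun t => ((ζ t)⁻¹ *ᵥ fun _ => (1 : ℝ)) x) atTop (nhds 1)) ∧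
    Tendsto (fun t => ∑ x, ((ζ t)⁻¹ *ᵥ fun _ => (1 : ℝ)) x) atTop
      (nhds (Fintype.card X : ℝ)) := by
  obtain rfl : ζ = fun t => Matrix.of fun a b => exp (-(t * dist a b)) := funext hζ
  have hweight := tendsto_similarity_matrix_atTop.matrix_inv_mulVec_of_tendsto_one
    (fun _ : X => (1 : ℝ))
  have hpoint := tendsto_pi_nhds.mp hweight
  refine ⟨tendsto_similarity_matrix_atTop, hpoint, ?_⟩
  simpa using tendsto_finsetSum Finset.univ fun x _ => hpoint x

/-- For a finite metric space `X` (distinct points) such that the similarity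
matrix of `tX` is invertible for all large `t`, the similarity matrix `ζ_{tX}` converges to
the identity matrix as `t → ∞`; consequently each weight `w_{tX}(tx) → 1` and
`Mag (tX) → |X|`. -/
theorem similarity_tendsto_identity (X : Type*) [Fintype X] [DecidableEq X] [MetricSpace X]
    (ζ : ℝ → Matrix X X ℝ)
    (hζ : ∀ t, ζ t = Matrix.of fun a b => Real.exp (-(t * dist a b)))
    (hinv : ∀ᶠ t in atTop, IsUnit (ζ t).det) :
    Tendsto ζ atTop (nhds (1 : Matrix X X ℝ)) ∧
    (∀ x : X, Tendsto (fun t => ((ζ t)⁻¹ *ᵥ fun _ => (1 : ℝ)) x) atTop (nhds 1)) ∧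
    Tendsto (fun t => ∑ x, ((ζ t)⁻¹ *ᵥ fun _ => (1 : ℝ)) x) atTop
      (nhds (Fintype.card X : ℝ)) :=
  similarity_tendsto_identity_general X ζ hζ
end

section
/- Monotonicity of magnitude under inclusion for Euclidean subsets: if Y ⊆ X are finite subsets of ℝⁿ, then Mag(Y) ≤ Mag(X). In particular, for any point x ∈ ℝⁿ, the quantity γ = Mag(X ∪ {x}) - Mag(X) is nonnegative. -/
/-!
For a positive definite `ζ`, `𝟙ᵀ ζ⁻¹ 𝟙` is the maximum of `2 uᵀ𝟙 - uᵀ ζ u`; extending a vector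
on `Y` by zero to `X` leaves this expression unchanged, so `Mag Y ≤ Mag X` as soon as `ζ_X` is
positive definite.

Positive definiteness of the kernel `exp (-‖x - y‖)` on a real inner product space comes from
subordination, `exp (-b) = 2/√π ∫₀^∞ exp (-v²) exp (-b² / (4 v²)) dv`, which writes it as a
mixture of Gaussian kernels `exp (-s ‖x - y‖²)`. Up to a diagonal scaling these are
`exp ⟪x, y⟫ = ∑ ⟪x, y⟫ᵏ / k!`, a sum of Schur powers of a Gram matrix; strictness holds because
the characters `y ↦ exp ⟪z, y⟫` are linearly independent.
-/

open Matrix Real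

/-- The similarity matrix of a finite subset of a metric space, indexed by its points. -/
noncomputable def simMatrix {E : Type*} [MetricSpace E] (X : Finset E) :
    Matrix X X ℝ :=
  Matrix.of fun i j => Real.exp (-dist (i : E) (j : E))

/-- The magnitude `Mag X = 𝟙ᵀ ζ_X⁻¹ 𝟙` of a finite subset of a metric space. -/
noncomputable def magnitude {E : Type*} [MetricSpace E] (X : Finset E) : ℝ :=
  letI := Classical.decEq E
  ∑ i, ((simMatrix X)⁻¹ *ᵥ fun _ => (1 : ℝ)) i

open Function MeasureTheory Set
open scoped RealInnerProductSpace

namespace Matrix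

variable {m n R : Type*} [Fintype m] [Fintype n]

section ExtendByZero

variable [NonUnitalNonAssocSemiring R] {e : m → n}

theorem extend_zero_dotProduct (he : Injective e) (u : m → R) (w : n → R) :
    extend e u 0 ⬝ᵥ w = u ⬝ᵥ (w ∘ e) := by
  classical
  refine (Fintype.sum_of_injective e he _ _ (fun j hj => ?_) fun i => ?_).symm
  · rw [extend_apply' _ _ _ (by simpa using hj), Pi.zero_apply, zero_mul]
  · rw [he.extend_apply]; rfl

theorem dotProduct_extend_zero (he : Injective e) (w : n → R) (v : m → R) :
    w ⬝ᵥ extend e v 0 = (w ∘ e) ⬝ᵥ v := by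
  classical
  refine (Fintype.sum_of_injective e he _ _ (fun j hj => ?_) fun i => ?_).symm
  · rw [extend_apply' _ _ _ (by simpa using hj), Pi.zero_apply, mul_zero]
  · rw [he.extend_apply]; rfl

theorem mulVec_extend_zero (he : Injective e) (M : Matrix n n R) (v : m → R) :
    M *ᵥ extend e v 0 = M.submatrix id e *ᵥ v :=
  funext fun _ => dotProduct_extend_zero he _ v

theorem extend_zero_dotProduct_mulVec_extend_zero (he : Injective e) (M : Matrix n n R)
    (u v : m → R) :
    extend e u 0 ⬝ᵥ (M *ᵥ extend e v 0) = u ⬝ᵥ (M.submatrix e e *ᵥ v) := by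
  rw [mulVec_extend_zero he, extend_zero_dotProduct he]
  rfl

end ExtendByZero

theorem IsSymm.dotProduct_mulVec_comm [CommSemiring R] {M : Matrix n n R} (hM : M.IsSymm)
    (u v : n → R) : u ⬝ᵥ (M *ᵥ v) = v ⬝ᵥ (M *ᵥ u) := by
  rw [dotProduct_mulVec, ← mulVec_transpose, dotProduct_comm, hM.eq]

theorem dotProduct_mulVec_self_eq_sum [CommSemiring R] (M : Matrix n n R) (c : n → R) :
    c ⬝ᵥ (M *ᵥ c) = ∑ i, ∑ j, c i * c j * M i j := by
  simp only [dotProduct, mulVec, Finset.mul_sum]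
  exact Finset.sum_congr rfl fun _ _ => Finset.sum_congr rfl fun _ _ => by ring

variable [DecidableEq m] [DecidableEq n]

theorem PosDef.mulVec_inv_mulVec {M : Matrix n n ℝ} (hM : M.PosDef) (b : n → ℝ) :
    M *ᵥ (M⁻¹ *ᵥ b) = b := by
  rw [mulVec_mulVec, mul_nonsing_inv _ ((isUnit_iff_isUnit_det M).1 hM.isUnit), one_mulVec]

theorem PosDef.two_mul_dotProduct_sub_le {M : Matrix n n ℝ} (hM : M.PosDef) (u b : n → ℝ) :
    2 * (u ⬝ᵥ b) - u ⬝ᵥ (M *ᵥ u) ≤ b ⬝ᵥ (M⁻¹ *ᵥ b) := by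
  set w := M⁻¹ *ᵥ b
  have hMw : M *ᵥ w = b := hM.mulVec_inv_mulVec b
  have h := hM.posSemidef.dotProduct_mulVec_nonneg (u - w)
  rw [star_trivial, mulVec_sub, dotProduct_sub, sub_dotProduct, sub_dotProduct, hMw,
    (isHermitian_iff_isSymm.1 hM.isHermitian).dotProduct_mulVec_comm w u, hMw,
    dotProduct_comm w b] at h
  linarith

theorem PosDef.dotProduct_inv_submatrix_mulVec_le {M : Matrix n n ℝ} (hM : M.PosDef)
    {e : m → n} (he : Injective e) (b : n → ℝ) :
    (b ∘ e) ⬝ᵥ ((M.submatrix e e)⁻¹ *ᵥ (b ∘ e)) ≤ b ⬝ᵥ (M⁻¹ *ᵥ b) := by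
  set v := (M.submatrix e e)⁻¹ *ᵥ (b ∘ e)
  have h := hM.two_mul_dotProduct_sub_le (extend e v 0) b
  rw [extend_zero_dotProduct_mulVec_extend_zero he, (hM.submatrix he).mulVec_inv_mulVec,
    extend_zero_dotProduct he, dotProduct_comm v] at h
  linarith

end Matrix

theorem MeasureTheory.setIntegral_pos_of_pos {X : Type*} [MeasurableSpace X] {μ : Measure X}
    {s : Set X} {f : X → ℝ} (hs : MeasurableSet s) (hμs : 0 < μ s) (hf : IntegrableOn f s μ)
    (hpos : ∀ x ∈ s, 0 < f x) : 0 < ∫ x in s, f x ∂μ := by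
  rw [setIntegral_pos_iff_support_of_nonneg_ae ((ae_restrict_iff' hs).2 (ae_of_all _
    fun x hx => (hpos x hx).le)) hf]
  exact hμs.trans_le (measure_mono fun x hx => ⟨(hpos x hx).ne', hx⟩)

section Subordination

variable {a : ℝ}

theorem hasDerivAt_const_div {v : ℝ} (hv : v ≠ 0) :
    HasDerivAt (fun v => a / v) (-(a / v ^ 2)) v := by
  simpa [div_eq_mul_inv] using (hasDerivAt_inv hv).const_mul a

theorem image_const_div_Ioi_zero (ha : 0 < a) : (fun v => a / v) '' Ioi 0 = Ioi 0 := by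
  refine Subset.antisymm (image_subset_iff.2 fun v hv => div_pos ha hv) fun u hu => ?_
  exact ⟨a / u, div_pos ha hu, div_div_cancel₀ ha.ne'⟩

theorem injOn_const_div_Ioi_zero (ha : 0 < a) : InjOn (fun v => a / v) (Ioi 0) :=
  fun _ _ _ _ h =>
    inv_injective (mul_right_injective₀ ha.ne' (by simpa only [div_eq_mul_inv] using h))

theorem integrableOn_Ioi_div_sq_mul_comp_const_div_iff (ha : 0 < a) (g : ℝ → ℝ) :
    IntegrableOn (fun v => a / v ^ 2 * g (a / v)) (Ioi 0) ↔ IntegrableOn g (Ioi 0) := by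
  conv_rhs => rw [← image_const_div_Ioi_zero ha,
    integrableOn_image_iff_integrableOn_abs_deriv_smul measurableSet_Ioi
      (fun v hv => (hasDerivAt_const_div (mem_Ioi.1 hv).ne').hasDerivWithinAt)
      (injOn_const_div_Ioi_zero ha)]
  refine integrableOn_congr_fun (fun v hv => ?_) measurableSet_Ioi
  rw [abs_neg, abs_of_pos (div_pos ha (pow_pos hv 2)), smul_eq_mul]

theorem integral_Ioi_div_sq_mul_comp_const_div (ha : 0 < a) (g : ℝ → ℝ) :
    ∫ v in Ioi 0, a / v ^ 2 * g (a / v) = ∫ v in Ioi 0, g v := by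
  conv_rhs => rw [← image_const_div_Ioi_zero ha]
  rw [integral_image_eq_integral_abs_deriv_smul measurableSet_Ioi
    (fun v hv => (hasDerivAt_const_div (mem_Ioi.1 hv).ne').hasDerivWithinAt)
    (injOn_const_div_Ioi_zero ha)]
  refine setIntegral_congr_fun measurableSet_Ioi fun v hv => ?_
  rw [abs_neg, abs_of_pos (div_pos ha (pow_pos hv 2)), smul_eq_mul]

theorem integral_Ioi_one_add_div_sq_mul_comp_sub_const_div (ha : 0 < a) (g : ℝ → ℝ) :
    ∫ v in Ioi 0, (1 + a / v ^ 2) * g (v - a / v) = ∫ u, g u := by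
  have hderiv : ∀ v ∈ Ioi (0 : ℝ),
      HasDerivWithinAt (fun v => v - a / v) (1 + a / v ^ 2) (Ioi 0) v := fun v hv => by
    simpa using
      ((hasDerivAt_id' v).fun_sub (hasDerivAt_const_div (mem_Ioi.1 hv).ne')).hasDerivWithinAt
  have hinj : InjOn (fun v => v - a / v) (Ioi 0) := StrictMonoOn.injOn fun u hu v _ huv => by
    have := div_lt_div_of_pos_left ha hu huv
    linarith
  have himage : (fun v => v - a / v) '' Ioi 0 = univ := by
    refine eq_univ_of_forall fun u => ?_
    -- the positive root of `v ^ 2 - u * v - a`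
    set r := √(u ^ 2 + 4 * a)
    have hr : r ^ 2 = u ^ 2 + 4 * a := Real.sq_sqrt (by positivity)
    have hur : |u| < r := by
      rw [← Real.sqrt_sq_eq_abs]
      exact Real.sqrt_lt_sqrt (sq_nonneg u) (by linarith)
    have hv : 0 < (u + r) / 2 := by linarith [neg_abs_le u]
    refine ⟨(u + r) / 2, hv, ?_⟩
    have hne : u + r ≠ 0 := by linarith
    field_simp
    linear_combination hr
  conv_rhs => rw [← setIntegral_univ, ← himage, integral_image_eq_integral_abs_deriv_smul
    measurableSet_Ioi hderiv hinj]
  refine setIntegral_congr_fun measurableSet_Ioi fun v hv => ?_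
  rw [abs_of_pos (by positivity), smul_eq_mul]

theorem integrableOn_Ioi_exp_neg_sq_mul_exp_neg_div_sq {t : ℝ} (ht : 0 ≤ t) :
    IntegrableOn (fun v => exp (-v ^ 2) * exp (-(t / v ^ 2))) (Ioi 0) := by
  have hgauss : IntegrableOn (fun v : ℝ => exp (-v ^ 2)) (Ioi 0) := by
    simpa using (integrable_exp_neg_mul_sq one_pos).integrableOn
  refine hgauss.mono' (by fun_prop) (ae_of_all _ fun v => ?_)
  rw [Real.norm_of_nonneg (by positivity)]
  exact mul_le_of_le_one_right (by positivity) (exp_le_one_iff.2 (by simp; positivity))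

theorem integral_Ioi_exp_neg_sq_mul_exp_neg_sq_div_sq (ha : 0 ≤ a) :
    ∫ v in Ioi 0, exp (-v ^ 2) * exp (-(a ^ 2 / v ^ 2)) = √π / 2 * exp (-(2 * a)) := by
  rcases ha.eq_or_lt with rfl | ha
  · simpa using integral_gaussian_Ioi 1
  set E := fun v => exp (-v ^ 2) * exp (-(a ^ 2 / v ^ 2))
  have hE : IntegrableOn E (Ioi 0) := integrableOn_Ioi_exp_neg_sq_mul_exp_neg_div_sq (sq_nonneg a)
  have hE_inv : ∀ v, E (a / v) = E v := fun v => by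
    rcases eq_or_ne v 0 with rfl | hv
    · simp
    simp only [E, ← exp_add]
    congr 1
    field_simp
    ring
  have hweight : ∫ v in Ioi 0, a / v ^ 2 * E v = ∫ v in Ioi 0, E v := by
    simpa only [hE_inv] using integral_Ioi_div_sq_mul_comp_const_div ha E
  have hweight_int : IntegrableOn (fun v => a / v ^ 2 * E v) (Ioi 0) := by
    simpa only [hE_inv] using (integrableOn_Ioi_div_sq_mul_comp_const_div_iff ha E).2 hE
  have hshear : √π = exp (2 * a) * ∫ v in Ioi 0, (1 + a / v ^ 2) * E v := by
    have hgauss : ∫ u, exp (-u ^ 2) = √π := by simpa using integral_gaussian 1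
    rw [← hgauss, ← integral_Ioi_one_add_div_sq_mul_comp_sub_const_div ha, ← integral_const_mul]
    refine setIntegral_congr_fun measurableSet_Ioi fun v hv => ?_
    have hv : v ≠ 0 := (mem_Ioi.1 hv).ne'
    have hsq : exp (-(v - a / v) ^ 2) = exp (2 * a) * E v := by
      simp only [E, ← exp_add]
      congr 1
      field_simp
      ring
    simp only [hsq]
    ring
  simp_rw [add_mul, one_mul] at hshear
  rw [integral_add hE hweight_int, hweight] at hshear
  rw [exp_neg]
  field_simp
  linarith

theorem exp_neg_eq_integral_exp_neg_sq_mul_exp_neg_sq_div_sq {b : ℝ} (hb : 0 ≤ b) :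
    exp (-b) = 2 / √π * ∫ v in Ioi 0, exp (-v ^ 2) * exp (-(b ^ 2 / 4 / v ^ 2)) := by
  have h := integral_Ioi_exp_neg_sq_mul_exp_neg_sq_div_sq (a := b / 2) (by positivity)
  simp only [div_pow, show (2 : ℝ) ^ 2 = 4 by norm_num, show 2 * (b / 2) = b by ring] at h
  rw [h]
  field_simp

end Subordination

variable {E : Type*} [NormedAddCommGroup E] [InnerProductSpace ℝ E]

theorem linearIndependent_exp_inner {ι : Type*} {z : ι → E} (hz : Injective z) :
    LinearIndependent ℝ fun i (y : E) => exp ⟪z i, y⟫ := by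
  let χ : E → Multiplicative E →* ℝ := fun w =>
    expMonoidHom.comp (innerₛₗ ℝ w).toAddMonoidHom.toMultiplicative
  have hχ : Injective χ := by
    intro w w' h
    have h' : ∀ y, ⟪w, y⟫ = ⟪w', y⟫ := fun y => by
      simpa [χ] using DFunLike.congr_fun h (Multiplicative.ofAdd y)
    rw [← sub_eq_zero, ← inner_self_eq_zero (𝕜 := ℝ), inner_sub_left, h', sub_self]
  exact (linearIndependent_monoidHom (Multiplicative E) ℝ).comp (χ ∘ z) (hχ.comp hz)

namespace Matrix

variable {ι : Type*} [Fintype ι]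

theorem posSemidef_inner_pow (x : ι → E) (k : ℕ) :
    (of fun i j => ⟪x i, x j⟫ ^ k).PosSemidef := by
  induction k with
  | zero =>
    simpa [vecMulVec] using posSemidef_vecMulVec_self_star (fun _ : ι => (1 : ℝ))
  | succ k ih =>
    have h : (of fun i j => ⟪x i, x j⟫ ^ (k + 1))
        = (of fun i j => ⟪x i, x j⟫ ^ k) ⊙ gram ℝ x := by
      ext i j
      simp [pow_succ, gram_apply]
    rw [h]
    exact ih.hadamard (posSemidef_gram ℝ x)

theorem posSemidef_exp_inner (x : ι → E) : (of fun i j => exp ⟪x i, x j⟫).PosSemidef := by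
  refine PosSemidef.of_dotProduct_mulVec_nonneg ?_ fun c => ?_
  · ext i j
    simp [real_inner_comm]
  rw [star_trivial, dotProduct_mulVec_self_eq_sum]
  have hsum : HasSum (fun k => ∑ i, ∑ j, c i * c j * (⟪x i, x j⟫ ^ k / k.factorial))
      (∑ i, ∑ j, c i * c j * exp ⟪x i, x j⟫) := by
    refine hasSum_sum fun i _ => hasSum_sum fun j _ => (HasSum.mul_left _ ?_)
    simpa [exp_eq_exp_ℝ] using NormedSpace.expSeries_div_hasSum_exp (x := ⟪x i, x j⟫)
  refine hsum.nonneg fun k => ?_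
  have h := (posSemidef_inner_pow x k).dotProduct_mulVec_nonneg c
  rw [star_trivial, dotProduct_mulVec_self_eq_sum] at h
  simp only [of_apply, mul_div, ← Finset.sum_div] at h ⊢
  positivity

theorem posSemidef_exp_neg_mul_norm_sub_sq (x : ι → E) {s : ℝ} (hs : 0 ≤ s) :
    (of fun i j => exp (-(s * ‖x i - x j‖ ^ 2))).PosSemidef := by
  set a : ι → ℝ := fun i => exp (-(s * ‖x i‖ ^ 2))
  have h : (of fun i j => exp (-(s * ‖x i - x j‖ ^ 2)))
      = (of fun i j => exp ⟪√(2 * s) • x i, √(2 * s) • x j⟫) ⊙ vecMulVec a (star a) := by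
    ext i j
    simp only [of_apply, hadamard_apply, vecMulVec_apply, star_trivial, a, real_inner_smul_left,
      real_inner_smul_right, ← mul_assoc, Real.mul_self_sqrt (by positivity : (0 : ℝ) ≤ 2 * s),
      ← exp_add, norm_sub_sq_real]
    ring_nf
  rw [h]
  exact (posSemidef_exp_inner _).hadamard (posSemidef_vecMulVec_self_star a)

theorem sum_exp_neg_mul_norm_sub_sq_mul_eq_zero {x : ι → E} {s : ℝ} (hs : 0 ≤ s) {c : ι → ℝ}
    (hc : c ⬝ᵥ ((of fun i j => exp (-(s * ‖x i - x j‖ ^ 2))) *ᵥ c) = 0) (y : E) :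
    ∑ j, exp (-(s * ‖y - x j‖ ^ 2)) * c j = 0 := by
  -- Adjoin `y` to the points: `c` extended by zero has zero energy for the enlarged
  -- positive semidefinite matrix, so it lies in its kernel; read off the row of `y`.
  let z : Option ι → E := fun o => o.elim y x
  have hz := posSemidef_exp_neg_mul_norm_sub_sq z hs
  have hker := (hz.dotProduct_mulVec_zero_iff (extend some c 0)).1 (by
    rw [star_trivial, extend_zero_dotProduct_mulVec_extend_zero (Option.some_injective ι)]
    exact hc)
  have h := congr_fun hker none
  rw [mulVec_extend_zero (Option.some_injective ι)] at h
  simpa [mulVec, dotProduct, z] using h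

theorem posDef_exp_neg_mul_norm_sub_sq {x : ι → E} (hx : Injective x) {s : ℝ} (hs : 0 < s) :
    (of fun i j => exp (-(s * ‖x i - x j‖ ^ 2))).PosDef := by
  have hpsd := posSemidef_exp_neg_mul_norm_sub_sq x hs.le
  refine posDef_iff_dotProduct_mulVec.2 ⟨hpsd.isHermitian, fun c hc => ?_⟩
  refine (hpsd.dotProduct_mulVec_nonneg c).lt_of_ne fun h0 => hc ?_
  rw [star_trivial] at h0
  have hsum : ∑ j, (c j * exp (-(s * ‖x j‖ ^ 2))) • (fun y => exp ⟪(2 * s) • x j, y⟫) = 0 := by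
    ext y
    have hsplit : ∀ j, c j * exp (-(s * ‖x j‖ ^ 2)) * exp ⟪(2 * s) • x j, y⟫
        = exp (s * ‖y‖ ^ 2) * (exp (-(s * ‖y - x j‖ ^ 2)) * c j) := fun j => by
      rw [mul_comm (exp _) (c j), mul_left_comm, mul_assoc, ← exp_add, ← exp_add,
        real_inner_smul_left, norm_sub_sq_real, real_inner_comm]
      ring_nf
    simp only [Finset.sum_apply, Pi.smul_apply, smul_eq_mul, Pi.zero_apply, hsplit,
      ← Finset.mul_sum, sum_exp_neg_mul_norm_sub_sq_mul_eq_zero hs.le h0.symm y, mul_zero]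
  have hcoeff := Fintype.linearIndependent_iff.1
    (linearIndependent_exp_inner ((smul_right_injective E (by positivity)).comp hx)) _ hsum
  funext j
  simpa using hcoeff j

theorem posDef_exp_neg_norm_sub {x : ι → E} (hx : Injective x) :
    (of fun i j => exp (-‖x i - x j‖)).PosDef := by
  refine posDef_iff_dotProduct_mulVec.2 ⟨?_, fun c hc => ?_⟩
  · ext i j
    simp [norm_sub_rev]
  set K : ι → ι → ℝ → ℝ := fun i j v =>
    c i * c j * (exp (-v ^ 2) * exp (-(‖x i - x j‖ ^ 2 / 4 / v ^ 2)))
  have hK : ∀ i j, IntegrableOn (K i j) (Ioi 0) := fun i j =>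
    (integrableOn_Ioi_exp_neg_sq_mul_exp_neg_div_sq (t := ‖x i - x j‖ ^ 2 / 4)
      (by positivity)).const_mul (c i * c j)
  have hrep : star c ⬝ᵥ ((of fun i j => exp (-‖x i - x j‖)) *ᵥ c)
      = 2 / √π * ∫ v in Ioi 0, ∑ i, ∑ j, K i j v := by
    simp only [star_trivial, dotProduct_mulVec_self_eq_sum, of_apply,
      integral_finsetSum _ fun i _ => integrable_finsetSum _ fun j _ => hK i j,
      integral_finsetSum _ fun j _ => hK _ j, Finset.mul_sum, K, integral_const_mul,
      exp_neg_eq_integral_exp_neg_sq_mul_exp_neg_sq_div_sq (norm_nonneg _)]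
    exact Finset.sum_congr rfl fun i _ => Finset.sum_congr rfl fun j _ => by ring
  rw [hrep]
  refine mul_pos (by positivity) (setIntegral_pos_of_pos measurableSet_Ioi (by simp)
    (integrable_finsetSum _ fun i _ => integrable_finsetSum _ fun j _ => hK i j) fun v hv => ?_)
  have h := (posDef_exp_neg_mul_norm_sub_sq hx (s := 1 / (4 * v ^ 2)) (by
    have := mem_Ioi.1 hv; positivity)).dotProduct_mulVec_pos hc
  rw [star_trivial, dotProduct_mulVec_self_eq_sum] at h
  have hK_eq : ∀ i j, K i j v
      = exp (-v ^ 2) * (c i * c j * exp (-(1 / (4 * v ^ 2) * ‖x i - x j‖ ^ 2))) := fun i j => by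
    simp only [K]
    rw [show ‖x i - x j‖ ^ 2 / 4 / v ^ 2 = 1 / (4 * v ^ 2) * ‖x i - x j‖ ^ 2 by ring]
    ring
  simp only [hK_eq, ← Finset.mul_sum]
  exact mul_pos (exp_pos _) h

end Matrix

theorem simMatrix_posDef (X : Finset E) : (simMatrix X).PosDef := by
  simpa only [simMatrix, dist_eq_norm] using
    posDef_exp_neg_norm_sub (x := ((↑) : X → E)) Subtype.val_injective

theorem magnitude_mono {X Y : Finset E} (h : Y ⊆ X) : magnitude Y ≤ magnitude X := by
  let := Classical.decEq E
  let e : Y → X := fun i => ⟨i, h i.2⟩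
  have he : Injective e := fun i j hij => Subtype.ext (congrArg (fun x : X => (x : E)) hij)
  have key := (simMatrix_posDef X).dotProduct_inv_submatrix_mulVec_le he 1
  simp only [dotProduct, Pi.one_comp, Pi.one_apply, one_mul] at key
  exact key

/-- Monotonicity of magnitude under inclusion for Euclidean subsets: if
`Y ⊆ X` are finite subsets of ℝⁿ then `Mag Y ≤ Mag X`; in particular, for any point `x`,
`Mag (X ∪ {x}) - Mag X ≥ 0`. -/
theorem magnitude_monotone (n : ℕ) (X Y Z : Finset (EuclideanSpace ℝ (Fin n)))
    (hYX : Y ⊆ X) (x : EuclideanSpace ℝ (Fin n))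
    (hZ : (Z : Set (EuclideanSpace ℝ (Fin n))) = insert x (X : Set (EuclideanSpace ℝ (Fin n)))) :
    magnitude Y ≤ magnitude X ∧ 0 ≤ magnitude Z - magnitude X := by
  have hXZ : X ⊆ Z := by
    rw [← Finset.coe_subset, hZ]
    exact Set.subset_insert x _
  exact ⟨magnitude_mono hYX, sub_nonneg.2 (magnitude_mono hXZ)⟩
end

section
/- Magnitude of a homogeneous finite metric space: if the isometry group of X acts transitively on X, then Mag(X) = |X|² / (𝟙ᵀ ζ_X 𝟙) = |X| / (Σ_y exp(-d(x₀, y))) for any fixed point x₀. -/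
open Matrix Real

/-- Magnitude of a homogeneous finite metric space. If the isometry group of
`X` acts transitively, then `Mag X = |X|² / (𝟙ᵀ ζ_X 𝟙) = |X| / (∑ y, exp (-d(x₀, y)))` for
any fixed point `x₀`. -/
theorem magnitude_homogeneous (X : Type*) [Fintype X] [DecidableEq X] [MetricSpace X]
    (htrans : ∀ x y : X, ∃ g : X ≃ X, (∀ a b, dist (g a) (g b) = dist a b) ∧ g x = y)
    (hinv : IsUnit (Matrix.of fun a b : X => Real.exp (-dist a b)).det) :
    let ζ : Matrix X X ℝ := Matrix.of fun a b : X => Real.exp (-dist a b)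
    let Mag := (fun _ => (1 : ℝ)) ⬝ᵥ (ζ⁻¹ *ᵥ fun _ => (1 : ℝ))
    Mag = (Fintype.card X : ℝ) ^ 2 / ((fun _ => (1 : ℝ)) ⬝ᵥ (ζ *ᵥ fun _ => (1 : ℝ))) ∧
    ∀ x₀ : X, Mag = (Fintype.card X : ℝ) / ∑ y, Real.exp (-dist x₀ y) := by
  intro ζ Mag
  rcases isEmpty_or_nonempty X with hE | hNE
  · constructor
    · simp [Mag, dotProduct]
    · intro x₀; exact hE.elim x₀
  · -- row sums are constant
    have hrow : ∀ x y : X, ∑ z, Real.exp (-dist x z) = ∑ z, Real.exp (-dist y z) := by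
      intro x y
      obtain ⟨g, hg, hgx⟩ := htrans x y
      calc ∑ z, Real.exp (-dist x z)
          = ∑ z, Real.exp (-dist (g x) (g z)) := by simp [hg]
        _ = ∑ z, Real.exp (-dist y z) := by
            rw [hgx]; exact Equiv.sum_comp g (fun z => Real.exp (-dist y z))
    obtain ⟨x₁⟩ := hNE
    set S : ℝ := ∑ z, Real.exp (-dist x₁ z) with hS
    have hSpos : 0 < S := Finset.sum_pos (fun z _ => Real.exp_pos _) ⟨x₁, Finset.mem_univ _⟩
    have hSne : S ≠ 0 := ne_of_gt hSpos
    have hmul : ζ *ᵥ (fun _ => (1 : ℝ)) = fun _ => S := by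
      funext x
      simp only [mulVec, dotProduct, ζ, Matrix.of_apply, mul_one]
      exact hrow x x₁
    have hinvmul : ζ⁻¹ *ᵥ (fun _ => (1 : ℝ)) = fun _ => S⁻¹ := by
      have h1 : ζ *ᵥ (fun _ => S⁻¹) = fun _ => (1 : ℝ) := by
        have : (fun _ : X => S⁻¹) = S⁻¹ • (fun _ : X => (1 : ℝ)) := by
          funext x; simp
        rw [this, Matrix.mulVec_smul, hmul]
        funext x; simp [hSne]
      calc ζ⁻¹ *ᵥ (fun _ => (1 : ℝ)) = ζ⁻¹ *ᵥ (ζ *ᵥ (fun _ => S⁻¹)) := by rw [h1]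
        _ = (ζ⁻¹ * ζ) *ᵥ (fun _ => S⁻¹) := Matrix.mulVec_mulVec _ _ _
        _ = fun _ => S⁻¹ := by rw [Matrix.nonsing_inv_mul _ hinv, Matrix.one_mulVec]
    have hMag : Mag = (Fintype.card X : ℝ) / S := by
      simp only [Mag]
      rw [hinvmul]
      simp [dotProduct, Finset.card_univ, div_eq_mul_inv]
    constructor
    · rw [hMag, hmul]
      simp only [dotProduct, one_mul]
      rw [Finset.sum_const, Finset.card_univ, nsmul_eq_mul]
      rw [div_eq_div_iff hSne (by have h0 : (0:ℝ) < Fintype.card X := Nat.cast_pos.mpr (Fintype.card_pos_iff.mpr ⟨x₁⟩); positivity)]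
      ring
    · intro x₀
      rw [hMag, hS, hrow x₁ x₀]
end
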